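/- Let (P_1, ..., P_d, U = [[A, B], [C, D]]) be a GR-unitary colligation with transfer function S. Then for all z, w in the open unit polydisk D^d one has the holomorphic difference identity: S(z) − S(w) = Σ_{k=1}^{d} (z_k − w_k) · C (I − Z(z)A)^{-1} P_k (I − A Z(w))^{-1} B, an identity of bounded operators from E to E*. -/

import Mathlib

open ContinuousLinearMap

noncomputable section

variable {d : ℕ} {H E F : Type*}
  [NormedAddCommGroup H] [InnerProductSpace ℂ H] [CompleteSpace H]
  [NormedAddCommGroup E] [InnerProductSpace ℂ E] [CompleteSpace E]
  [NormedAddCommGroup F] [InnerProductSpace ℂ F] [CompleteSpace F]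

/-- `Z(z) = z₁ P₁ + ⋯ + z_d P_d`. -/
def Zop (P : Fin d → H →L[ℂ] H) (z : Fin d → ℂ) : H →L[ℂ] H :=
  ∑ k, z k • P k

/-- The transfer function `S(z) = D + C (I - Z(z)A)⁻¹ Z(z) B` of a Givone–Roesser
colligation. -/
def transferFn (P : Fin d → H →L[ℂ] H) (A : H →L[ℂ] H) (B : E →L[ℂ] H)
    (C : H →L[ℂ] F) (D : E →L[ℂ] F) (z : Fin d → ℂ) : E →L[ℂ] F :=
  D + C ∘L Ring.inverse (1 - Zop P z * A) ∘L (Zop P z ∘L B)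

/-!
The difference `S(z) - S(w)` equals `C (X_z Z(z) - X_w Z(w)) B` with `X_z = (I - Z(z)A)⁻¹`.
Pushing `Z(w)` through its resolvent, `X_w Z(w) = Z(w) (I - A Z(w))⁻¹`, and factoring out the two
resolvents turns the middle factor into `X_z (Z(z) - Z(w)) (I - A Z(w))⁻¹`, a ring identity; the
identity `Z(z) - Z(w) = ∑ₖ (zₖ - wₖ) Pₖ` then gives the sum. Only invertibility needs analysis:
`‖A‖ ≤ 1` because `A†A ≤ A†A + C†C = I`, and `‖Z(z)‖ ≤ maxₖ |zₖ| < 1` because the `Pₖ` split `H`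
into mutually orthogonal pieces.
-/

namespace Ring

variable {R : Type*} [Ring R]

theorem inverse_one_sub_mul_mul_self {a b : R} (hab : IsUnit (1 - a * b))
    (hba : IsUnit (1 - b * a)) : inverse (1 - a * b) * a = a * inverse (1 - b * a) :=
  calc inverse (1 - a * b) * a
      = inverse (1 - a * b) * (a * (1 - b * a)) * inverse (1 - b * a) := by
        rw [mul_assoc, mul_assoc a, mul_inverse_cancel _ hba, mul_one]
    _ = inverse (1 - a * b) * (1 - a * b) * (a * inverse (1 - b * a)) := by noncomm_ring
    _ = a * inverse (1 - b * a) := by rw [inverse_mul_cancel _ hab, one_mul]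

theorem inverse_one_sub_mul_mul_sub {a z w : R} (hz : IsUnit (1 - z * a))
    (hw : IsUnit (1 - w * a)) (hw' : IsUnit (1 - a * w)) :
    inverse (1 - z * a) * z - inverse (1 - w * a) * w
      = inverse (1 - z * a) * (z - w) * inverse (1 - a * w) := by
  rw [inverse_one_sub_mul_mul_self hw hw']
  calc inverse (1 - z * a) * z - w * inverse (1 - a * w)
      = inverse (1 - z * a) * z * ((1 - a * w) * inverse (1 - a * w))
        - inverse (1 - z * a) * (1 - z * a) * (w * inverse (1 - a * w)) := by
        rw [mul_inverse_cancel _ hw', inverse_mul_cancel _ hz, mul_one, one_mul]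
    _ = inverse (1 - z * a) * (z - w) * inverse (1 - a * w) := by noncomm_ring

end Ring

section NormedRing

variable {R : Type*} [NormedRing R] [HasSummableGeomSeries R] {x a : R}

theorem isUnit_one_sub_mul_of_norm_lt_one_of_norm_le_one (hx : ‖x‖ < 1) (ha : ‖a‖ ≤ 1) :
    IsUnit (1 - x * a) :=
  isUnit_one_sub_of_norm_lt_one <| (norm_mul_le x a).trans_lt <|
    mul_lt_one_of_nonneg_of_lt_one_left (norm_nonneg x) hx ha

theorem isUnit_one_sub_mul_of_norm_le_one_of_norm_lt_one (ha : ‖a‖ ≤ 1) (hx : ‖x‖ < 1) :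
    IsUnit (1 - a * x) :=
  isUnit_one_sub_of_norm_lt_one <| (norm_mul_le a x).trans_lt <|
    mul_lt_one_of_nonneg_of_lt_one_right ha (norm_nonneg x) hx

end NormedRing

theorem inner_apply_eq_zero_of_mul_eq_zero {P Q : H →L[ℂ] H} (hP : IsSelfAdjoint P)
    (hPQ : P * Q = 0) (x y : H) : inner ℂ (P x) (Q y) = 0 := by
  rw [← adjoint_inner_right, hP.adjoint_eq]
  exact (congrArg (inner ℂ x) (DFunLike.congr_fun hPQ y)).trans (inner_zero_right x)

theorem norm_sum_sq_of_pairwise_inner_eq_zero {𝕜 V ι : Type*} [RCLike 𝕜]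
    [NormedAddCommGroup V] [InnerProductSpace 𝕜 V] (s : Finset ι) (v : ι → V)
    (hv : Pairwise fun i j => inner 𝕜 (v i) (v j) = 0) :
    ‖∑ i ∈ s, v i‖ ^ 2 = ∑ i ∈ s, ‖v i‖ ^ 2 := by
  classical
  induction s using Finset.induction_on with
  | empty => simp
  | insert i s hi ih =>
    rw [Finset.sum_insert hi, Finset.sum_insert hi, ← ih]
    simp only [sq]
    refine norm_add_sq_eq_norm_sq_add_norm_sq_of_inner_eq_zero (𝕜 := 𝕜) (v i) (∑ j ∈ s, v j) ?_
    rw [inner_sum]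
    exact Finset.sum_eq_zero fun j hj => hv (ne_of_mem_of_not_mem hj hi).symm

theorem norm_sum_smul_apply_sq {ι : Type*} [Fintype ι] {P : ι → H →L[ℂ] H}
    (hP : ∀ k, IsSelfAdjoint (P k)) (hPorth : Pairwise fun j k => P j * P k = 0)
    (c : ι → ℂ) (x : H) :
    ‖(∑ k, c k • P k) x‖ ^ 2 = ∑ k, ‖c k‖ ^ 2 * ‖P k x‖ ^ 2 := by
  simp only [sum_apply, smul_apply]
  rw [norm_sum_sq_of_pairwise_inner_eq_zero (𝕜 := ℂ)]
  · simp only [norm_smul, mul_pow]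
  · intro j k hjk
    rw [inner_smul_left, inner_smul_right, inner_apply_eq_zero_of_mul_eq_zero (hP j) (hPorth hjk),
      mul_zero, mul_zero]

theorem norm_sum_smul_le {ι : Type*} [Fintype ι] {P : ι → H →L[ℂ] H}
    (hP : ∀ k, IsSelfAdjoint (P k)) (hPorth : Pairwise fun j k => P j * P k = 0)
    (hPsum : ∑ k, P k = 1) {c : ι → ℂ} {r : ℝ} (hr : 0 ≤ r) (hc : ∀ k, ‖c k‖ ≤ r) :
    ‖∑ k, c k • P k‖ ≤ r := by
  refine opNorm_le_bound _ hr fun x => ?_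
  have hx : ∑ k, ‖P k x‖ ^ 2 = ‖x‖ ^ 2 := by
    simpa [hPsum] using (norm_sum_smul_apply_sq hP hPorth 1 x).symm
  refine le_of_pow_le_pow_left₀ two_ne_zero (by positivity) ?_
  calc ‖(∑ k, c k • P k) x‖ ^ 2 = ∑ k, ‖c k‖ ^ 2 * ‖P k x‖ ^ 2 :=
        norm_sum_smul_apply_sq hP hPorth c x
    _ ≤ ∑ k, r ^ 2 * ‖P k x‖ ^ 2 := by gcongr with k; exact hc k
    _ = (r * ‖x‖) ^ 2 := by rw [← Finset.mul_sum, hx, mul_pow]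

theorem norm_Zop_lt_one {P : Fin d → H →L[ℂ] H}
    (hP : ∀ k, IsSelfAdjoint (P k)) (hPorth : ∀ j k, j ≠ k → P j * P k = 0)
    (hPsum : ∑ k, P k = 1) {z : Fin d → ℂ} (hz : ∀ k, ‖z k‖ < 1) : ‖Zop P z‖ < 1 := by
  set r := Finset.univ.sup fun k => ‖z k‖₊
  have hr : r < 1 := (Finset.sup_lt_iff zero_lt_one).2 fun k _ => hz k
  exact (norm_sum_smul_le hP (fun j k => hPorth j k) hPsum r.2
    fun k => Finset.le_sup (f := fun k => ‖z k‖₊) (Finset.mem_univ k)).trans_lt hr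

theorem norm_le_one_of_adjoint_mul_self_add_eq_one {A : H →L[ℂ] H} {C : H →L[ℂ] F}
    (h : adjoint A * A + adjoint C ∘L C = 1) : ‖A‖ ≤ 1 := by
  have hle : star A * A ≤ 1 := by
    rw [← h, star_eq_adjoint]
    exact le_add_of_nonneg_right ((nonneg_iff_isPositive _).2 (isPositive_adjoint_comp_self C))
  rw [← sq_le_one_iff₀ (norm_nonneg A), sq, ← CStarRing.norm_star_mul_self]
  exact (CStarAlgebra.norm_le_norm_of_nonneg_of_le (star_mul_self_nonneg A) hle).trans norm_id_le

theorem difference_identity_of_GR_unitary_colligation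
    (P : Fin d → H →L[ℂ] H)
    (hPsa : ∀ k, IsSelfAdjoint (P k))
    (hPorth : ∀ j k, j ≠ k → P j * P k = 0)
    (hPsum : ∑ k, P k = 1)
    (A : H →L[ℂ] H) (B : E →L[ℂ] H) (C : H →L[ℂ] F) (D : E →L[ℂ] F)
    (hU4 : adjoint A * A + adjoint C ∘L C = 1)
    (z w : Fin d → ℂ) (hz : ∀ k, ‖z k‖ < 1) (hw : ∀ k, ‖w k‖ < 1) :
    transferFn P A B C D z - transferFn P A B C D w
      = ∑ k, (z k - w k) •
          (C ∘L Ring.inverse (1 - Zop P z * A) ∘L P k ∘L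
            Ring.inverse (1 - A * Zop P w) ∘L B) := by
  have hA := norm_le_one_of_adjoint_mul_self_add_eq_one hU4
  have hZz := norm_Zop_lt_one hPsa hPorth hPsum hz
  have hZw := norm_Zop_lt_one hPsa hPorth hPsum hw
  have hZ : Zop P z - Zop P w = ∑ k, (z k - w k) • P k := by
    simp only [Zop, ← Finset.sum_sub_distrib, sub_smul]
  calc transferFn P A B C D z - transferFn P A B C D w
      = C ∘L (Ring.inverse (1 - Zop P z * A) * Zop P z
          - Ring.inverse (1 - Zop P w * A) * Zop P w) ∘L B := by
        simp only [transferFn, comp_sub, sub_comp, add_sub_add_left_eq_sub, mul_def, comp_assoc]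
    _ = C ∘L (Ring.inverse (1 - Zop P z * A) * (Zop P z - Zop P w)
          * Ring.inverse (1 - A * Zop P w)) ∘L B := by
        rw [Ring.inverse_one_sub_mul_mul_sub
          (isUnit_one_sub_mul_of_norm_lt_one_of_norm_le_one hZz hA)
          (isUnit_one_sub_mul_of_norm_lt_one_of_norm_le_one hZw hA)
          (isUnit_one_sub_mul_of_norm_le_one_of_norm_lt_one hA hZw)]
    _ = _ := by
        simp only [hZ, Finset.mul_sum, Finset.sum_mul, finsetSum_comp, comp_finsetSum,
          mul_smul_comm, smul_mul_assoc, comp_smul, smul_comp, mul_def, comp_assoc]
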